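/- arXiv:math/0509676 — 2 statements merged into one kernel-verified Lean document; each statement's English description precedes it below -/
import Mathlib

section
/- The bracket on the coordinate ring of SL(2,ℝ) defined by {a,b}=λ(1−a²−b²), {a,c}=λ(a²+c²−1), {a,d}=λ(a−d)(b−c), {b,c}=λ(a+d)(b+c), {b,d}=λ(b²+d²−1), {c,d}=λ(1−c²−d²) satisfies the Jacobi identity and is compatible with the relation ad−bc=1, i.e., {x, ad−bc}=0 for x ∈ {a,b,c,d}. -/
open MvPolynomial

noncomputable section

abbrev R4 : Type := MvPolynomial (Fin 4) ℝ

/-- The biderivation determined by the matrix `Pm` of brackets of generators. -/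
def pb (Pm : Fin 4 → Fin 4 → R4) (f g : R4) : R4 :=
  ∑ i : Fin 4, ∑ j : Fin 4, Pm i j * pderiv i f * pderiv j g

/-- Variables: `a = X 0, b = X 1, c = X 2, d = X 3`. -/
def a : R4 := X 0
def b : R4 := X 1
def c : R4 := X 2
def d : R4 := X 3

/-- The K-type bracket matrix: `{a,b}=λ(1−a²−b²)`, `{a,c}=λ(a²+c²−1)`, `{a,d}=λ(a−d)(b−c)`,
`{b,c}=λ(a+d)(b+c)`, `{b,d}=λ(b²+d²−1)`, `{c,d}=λ(1−c²−d²)`, extended antisymmetrically. -/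
def PK (lam : ℝ) : Fin 4 → Fin 4 → R4 :=
  ![ ![0, C lam * (1 - a^2 - b^2), C lam * (a^2 + c^2 - 1), C lam * ((a - d)*(b - c))],
     ![-(C lam * (1 - a^2 - b^2)), 0, C lam * ((a + d)*(b + c)), C lam * (b^2 + d^2 - 1)],
     ![-(C lam * (a^2 + c^2 - 1)), -(C lam * ((a + d)*(b + c))), 0, C lam * (1 - c^2 - d^2)],
     ![-(C lam * ((a - d)*(b - c))), -(C lam * (b^2 + d^2 - 1)), -(C lam * (1 - c^2 - d^2)), 0] ]

section Aux

variable (Pm : Fin 4 → Fin 4 → R4)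

lemma pb_add_left (f g h : R4) : pb Pm (f + g) h = pb Pm f h + pb Pm g h := by
  simp [pb, map_add, add_mul, mul_add, Finset.sum_add_distrib]

lemma pb_add_right (f g h : R4) : pb Pm f (g + h) = pb Pm f g + pb Pm f h := by
  simp [pb, map_add, add_mul, mul_add, Finset.sum_add_distrib]

lemma pb_C_left (r : ℝ) (h : R4) : pb Pm (C r) h = 0 := by
  simp [pb, pderiv_C]

lemma pb_C_right (f : R4) (r : ℝ) : pb Pm f (C r) = 0 := by
  simp [pb, pderiv_C]

lemma pb_zero_right (f : R4) : pb Pm f 0 = 0 := by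
  simp [pb]

lemma pb_mul_left (f g h : R4) :
    pb Pm (f * g) h = f * pb Pm g h + g * pb Pm f h := by
  simp only [pb, pderiv_mul, Finset.mul_sum, ← Finset.sum_add_distrib]
  exact Finset.sum_congr rfl fun i _ => Finset.sum_congr rfl fun j _ => by ring

lemma pb_mul_right (f g h : R4) :
    pb Pm f (g * h) = g * pb Pm f h + h * pb Pm f g := by
  simp only [pb, pderiv_mul, Finset.mul_sum, ← Finset.sum_add_distrib]
  exact Finset.sum_congr rfl fun i _ => Finset.sum_congr rfl fun j _ => by ring

lemma pb_antisymm (hA : ∀ i j, Pm j i = - Pm i j) (f g : R4) :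
    pb Pm g f = - pb Pm f g := by
  have key : pb Pm f g + pb Pm g f = 0 := by
    unfold pb
    rw [Finset.sum_comm (f := fun i j => Pm i j * pderiv i g * pderiv j f),
      ← Finset.sum_add_distrib]
    refine Finset.sum_eq_zero fun i _ => ?_
    rw [← Finset.sum_add_distrib]
    refine Finset.sum_eq_zero fun j _ => ?_
    rw [hA i j]; ring
  linear_combination key

lemma pb_X_left (i : Fin 4) (g : R4) :
    pb Pm (X i) g = ∑ j : Fin 4, Pm i j * pderiv j g := by
  unfold pb
  rw [Finset.sum_eq_single i]
  · simp
  · intro b' _ hb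
    refine Finset.sum_eq_zero fun j _ => ?_
    rw [pderiv_X_of_ne hb.symm]; ring
  · intro h; exact absurd (Finset.mem_univ i) h

lemma pb_XX (i j : Fin 4) : pb Pm (X i) (X j) = Pm i j := by
  rw [pb_X_left, Finset.sum_eq_single j]
  · simp
  · intro b' _ hb; rw [pderiv_X_of_ne hb.symm]; ring
  · intro h; exact absurd (Finset.mem_univ j) h

end Aux

lemma pk00 (lam : ℝ) : PK lam 0 0 = 0 := rfl
lemma pk01 (lam : ℝ) : PK lam 0 1 = C lam * (1 - a^2 - b^2) := rfl
lemma pk02 (lam : ℝ) : PK lam 0 2 = C lam * (a^2 + c^2 - 1) := rfl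
lemma pk03 (lam : ℝ) : PK lam 0 3 = C lam * ((a - d)*(b - c)) := rfl
lemma pk10 (lam : ℝ) : PK lam 1 0 = -(C lam * (1 - a^2 - b^2)) := rfl
lemma pk11 (lam : ℝ) : PK lam 1 1 = 0 := rfl
lemma pk12 (lam : ℝ) : PK lam 1 2 = C lam * ((a + d)*(b + c)) := rfl
lemma pk13 (lam : ℝ) : PK lam 1 3 = C lam * (b^2 + d^2 - 1) := rfl
lemma pk20 (lam : ℝ) : PK lam 2 0 = -(C lam * (a^2 + c^2 - 1)) := rfl
lemma pk21 (lam : ℝ) : PK lam 2 1 = -(C lam * ((a + d)*(b + c))) := rfl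
lemma pk22 (lam : ℝ) : PK lam 2 2 = 0 := rfl
lemma pk23 (lam : ℝ) : PK lam 2 3 = C lam * (1 - c^2 - d^2) := rfl
lemma pk30 (lam : ℝ) : PK lam 3 0 = -(C lam * ((a - d)*(b - c))) := rfl
lemma pk31 (lam : ℝ) : PK lam 3 1 = -(C lam * (b^2 + d^2 - 1)) := rfl
lemma pk32 (lam : ℝ) : PK lam 3 2 = -(C lam * (1 - c^2 - d^2)) := rfl
lemma pk33 (lam : ℝ) : PK lam 3 3 = 0 := rfl

lemma pdX (i j : Fin 4) : pderiv i (X j : R4) = if j = i then 1 else 0 := by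
  rcases eq_or_ne j i with h | h
  · simp [h]
  · simp [h]

/-- The Jacobiator. -/
def Jf (Pm : Fin 4 → Fin 4 → R4) (f g h : R4) : R4 :=
  pb Pm f (pb Pm g h) + pb Pm g (pb Pm h f) + pb Pm h (pb Pm f g)

section JAux

variable (Pm : Fin 4 → Fin 4 → R4)

lemma J_cyc (f g h : R4) : Jf Pm f g h = Jf Pm g h f := by
  unfold Jf; ring

lemma J_add1 (f f' g h : R4) :
    Jf Pm (f + f') g h = Jf Pm f g h + Jf Pm f' g h := by
  simp only [Jf, pb_add_left, pb_add_right]; ring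

lemma J_C1 (r : ℝ) (g h : R4) : Jf Pm (C r) g h = 0 := by
  simp [Jf, pb_C_left, pb_C_right, pb_zero_right, pb_add_right]

lemma J_mul1 (hA : ∀ i j, Pm j i = - Pm i j) (f f' g h : R4) :
    Jf Pm (f * f') g h = f * Jf Pm f' g h + f' * Jf Pm f g h := by
  simp only [Jf, pb_mul_left, pb_mul_right, pb_add_right]
  linear_combination (pb Pm h f') * (pb_antisymm Pm hA f g) +
    (pb Pm h f) * (pb_antisymm Pm hA f' g)

end JAux

lemma PK_anti (lam : ℝ) : ∀ i j, PK lam j i = - PK lam i j := by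
  intro i j
  fin_cases i <;> fin_cases j <;>
    simp only [Fin.zero_eta, Fin.mk_one, show (⟨2, by omega⟩ : Fin 4) = 2 from rfl,
      show (⟨3, by omega⟩ : Fin 4) = 3 from rfl,
      pk00, pk01, pk02, pk03, pk10, pk11, pk12, pk13,
      pk20, pk21, pk22, pk23, pk30, pk31, pk32, pk33, neg_neg, neg_zero]

set_option maxHeartbeats 2000000 in
lemma Jgen (lam : ℝ) (i j k : Fin 4) : Jf (PK lam) (X i) (X j) (X k) = 0 := by
  fin_cases i <;> fin_cases j <;> fin_cases k <;>
  · simp only [Jf, pb_XX, pb_X_left, Fin.sum_univ_four, Fin.zero_eta, Fin.mk_one,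
      show (⟨2, by omega⟩ : Fin 4) = 2 from rfl, show (⟨3, by omega⟩ : Fin 4) = 3 from rfl,
      pk00, pk01, pk02, pk03, pk10, pk11, pk12, pk13,
      pk20, pk21, pk22, pk23, pk30, pk31, pk32, pk33,
      a, b, c, d, pderiv_C_mul, map_sub, map_add, map_neg, pderiv_one, pderiv_mul,
      pderiv_pow, pdX, pderiv_C, map_zero]
    simp only [reduceIte, Fin.reduceEq, ite_true, ite_false, mul_zero, zero_mul, mul_one,
      add_zero, zero_add, sub_zero, neg_zero, zero_sub]
    simp only [map_zero, mul_zero, zero_mul, add_zero, zero_add, sub_zero, zero_sub,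
      neg_zero, neg_neg, mul_one]
    try ring

lemma J3 (lam : ℝ) (i j : Fin 4) (h : R4) : Jf (PK lam) (X i) (X j) h = 0 := by
  rw [J_cyc, J_cyc]
  induction h using MvPolynomial.induction_on with
  | C r => exact J_C1 _ r _ _
  | add p q hp hq => rw [J_add1, hp, hq, add_zero]
  | mul_X p k hp =>
    rw [J_mul1 _ (PK_anti lam), hp,
      show Jf (PK lam) (X k) (X i) (X j) = 0 from by rw [J_cyc]; exact Jgen lam i j k]
    ring

lemma J2 (lam : ℝ) (i : Fin 4) (g h : R4) : Jf (PK lam) (X i) g h = 0 := by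
  rw [J_cyc]
  induction g using MvPolynomial.induction_on with
  | C r => exact J_C1 _ r _ _
  | add p q hp hq => rw [J_add1, hp, hq, add_zero]
  | mul_X p k hp =>
    rw [J_mul1 _ (PK_anti lam), hp,
      show Jf (PK lam) (X k) h (X i) = 0 from by rw [J_cyc, J_cyc]; exact J3 lam i k h]
    ring

lemma J1 (lam : ℝ) (f g h : R4) : Jf (PK lam) f g h = 0 := by
  induction f using MvPolynomial.induction_on with
  | C r => exact J_C1 _ r _ _
  | add p q hp hq => rw [J_add1, hp, hq, add_zero]
  | mul_X p k hp =>
    rw [J_mul1 _ (PK_anti lam), hp, J2 lam k g h]; ring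

set_option maxHeartbeats 1000000 in
/-- For `λ > 0`, the K-type bracket satisfies the Jacobi identity and is compatible with the
relation `ad − bc = 1`: the bracket of each generator with `ad − bc − 1` vanishes modulo the
ideal generated by `ad − bc − 1`. -/
theorem stmt_1 (lam : ℝ) (hlam : 0 < lam) :
    (∀ f g h : R4,
      pb (PK lam) f (pb (PK lam) g h) + pb (PK lam) g (pb (PK lam) h f) +
        pb (PK lam) h (pb (PK lam) f g) = 0) ∧
    (∀ i : Fin 4,
      pb (PK lam) (X i) (a * d - b * c - 1) ∈ Ideal.span {(a * d - b * c - 1 : R4)}) := by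
  constructor
  · intro f g h
    exact J1 lam f g h
  · have key : ∀ i : Fin 4, ∀ w : R4,
        (∑ j : Fin 4, PK lam i j * pderiv j (a * d - b * c - 1))
          = (a * d - b * c - 1) * w →
        pb (PK lam) (X i) (a * d - b * c - 1) ∈ Ideal.span {(a * d - b * c - 1 : R4)} := by
      intro i w hw
      rw [Ideal.mem_span_singleton, pb_X_left, hw]
      exact Dvd.intro w rfl
    intro i
    fin_cases i
    · refine key _ (C lam * (c - b)) ?_
      rw [Fin.sum_univ_four]
      simp only [Fin.zero_eta, pk00, pk01, pk02, pk03, a, b, c, d, pderiv_C_mul, map_sub,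
        map_add, pderiv_one, pderiv_mul, pderiv_pow, pdX, pderiv_C]
      simp only [reduceIte, Fin.reduceEq, ite_true, ite_false, mul_zero, zero_mul, mul_one,
        add_zero, zero_add, sub_zero, neg_zero, zero_sub]
      try simp only [map_zero, mul_zero, zero_mul, add_zero, zero_add, sub_zero, zero_sub,
        neg_zero, neg_neg, mul_one]
      ring
    · refine key _ (C lam * (a + d)) ?_
      rw [Fin.sum_univ_four]
      simp only [Fin.mk_one, pk10, pk11, pk12, pk13, a, b, c, d, pderiv_C_mul, map_sub,
        map_add, map_neg, pderiv_one, pderiv_mul, pderiv_pow, pdX, pderiv_C]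
      simp only [reduceIte, Fin.reduceEq, ite_true, ite_false, mul_zero, zero_mul, mul_one,
        add_zero, zero_add, sub_zero, neg_zero, zero_sub]
      try simp only [map_zero, mul_zero, zero_mul, add_zero, zero_add, sub_zero, zero_sub,
        neg_zero, neg_neg, mul_one]
      ring
    · refine key _ (-(C lam * (a + d))) ?_
      rw [Fin.sum_univ_four]
      simp only [show (⟨2, by omega⟩ : Fin 4) = 2 from rfl, pk20, pk21, pk22, pk23, a, b, c, d,
        pderiv_C_mul, map_sub, map_add, map_neg, pderiv_one, pderiv_mul, pderiv_pow, pdX,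
        pderiv_C]
      simp only [reduceIte, Fin.reduceEq, ite_true, ite_false, mul_zero, zero_mul, mul_one,
        add_zero, zero_add, sub_zero, neg_zero, zero_sub]
      try simp only [map_zero, mul_zero, zero_mul, add_zero, zero_add, sub_zero, zero_sub,
        neg_zero, neg_neg, mul_one]
      ring
    · refine key _ (C lam * (c - b)) ?_
      rw [Fin.sum_univ_four]
      simp only [show (⟨3, by omega⟩ : Fin 4) = 3 from rfl, pk30, pk31, pk32, pk33, a, b, c, d,
        pderiv_C_mul, map_sub, map_add, map_neg, pderiv_one, pderiv_mul, pderiv_pow, pdX,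
        pderiv_C]
      simp only [reduceIte, Fin.reduceEq, ite_true, ite_false, mul_zero, zero_mul, mul_one,
        add_zero, zero_add, sub_zero, neg_zero, zero_sub]
      try simp only [map_zero, mul_zero, zero_mul, add_zero, zero_add, sub_zero, zero_sub,
        neg_zero, neg_neg, mul_one]
      ring
end
end

section
/- Let α,β,γ ∈ ℝ with αβ−γ²=1, and let Ā = αa²+βb²+2γab, B̄ = αac+βbd+γ(ad+bc), D̄ = αc²+βd²+2γcd in the Poisson algebra A^A_λ (the coordinate ring of SL(2,ℝ) with {a,b}=λab, {a,c}=λac, {a,d}=2λbc, {b,c}=0, {b,d}=λbd, {c,d}=λcd). Then {Ā,B̄} = 2λĀ(B̄−γ), {Ā,D̄} = 4λB̄(B̄−γ), {B̄,D̄} = 2λD̄(B̄−γ), i.e., the subalgebra generated by Ā,B̄,D̄ is Poisson-isomorphic to H^A_{λ,−γ}. -/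
open MvPolynomial

noncomputable section

/-- The A-type bracket matrix on `SL(2,ℝ)`. -/
def PA (lam : ℝ) : Fin 4 → Fin 4 → R4 :=
  ![ ![0, C lam * (a * b), C lam * (a * c), C (2*lam) * (b * c)],
     ![-(C lam * (a * b)), 0, 0, C lam * (b * d)],
     ![-(C lam * (a * c)), 0, 0, C lam * (c * d)],
     ![-(C (2*lam) * (b * c)), -(C lam * (b * d)), -(C lam * (c * d)), 0] ]

/-- The defining relation of `SL(2,ℝ)`. -/
def rel : R4 := a * d - b * c - 1

/-! The three brackets hold in `ℝ[a,b,c,d]` itself, as exact polynomial identities, once the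
constant `γ` in `B̄ - γ` is read as `γ (ad - bc)`; reducing modulo `ad - bc - 1` turns them into the
stated relations. -/

@[simp]
lemma Derivation.map_ofNat {R A M : Type*} [CommSemiring R] [CommSemiring A] [AddCommMonoid M]
    [Algebra R A] [Module A M] [Module R M] (D : Derivation R A M) (n : ℕ) [n.AtLeastTwo] :
    D (no_index (OfNat.ofNat n) : A) = 0 := by
  rw [← Nat.cast_ofNat]
  exact D.map_natCast n

lemma mul_sub_mul_sub_mem_span_sub_one {R : Type*} [CommRing R] (x y u g : R) :
    x * (y - g * u) - x * (y - g) ∈ Ideal.span {u - 1} :=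
  Ideal.mem_span_singleton'.mpr ⟨-(g * x), by ring⟩

lemma pb_PA (lam : ℝ) (f g : R4) :
    pb (PA lam) f g =
      C lam * (a * b) * (pderiv 0 f * pderiv 1 g - pderiv 1 f * pderiv 0 g) +
      C lam * (a * c) * (pderiv 0 f * pderiv 2 g - pderiv 2 f * pderiv 0 g) +
      C (2 * lam) * (b * c) * (pderiv 0 f * pderiv 3 g - pderiv 3 f * pderiv 0 g) +
      C lam * (b * d) * (pderiv 1 f * pderiv 3 g - pderiv 3 f * pderiv 1 g) +
      C lam * (c * d) * (pderiv 2 f * pderiv 3 g - pderiv 3 f * pderiv 2 g) := by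
  simp only [pb, PA, Fin.sum_univ_four, Matrix.cons_val_zero, Matrix.cons_val_one,
    Matrix.cons_val_two, Matrix.cons_val_three, Matrix.head_cons, Matrix.tail_cons]
  ring

lemma sub_mem_span_rel_of_eq {p x y : R4} {k γ : ℝ}
    (hp : p = C k * (x * (y - C γ * (a * d - b * c)))) :
    p - C k * (x * (y - C γ)) ∈ Ideal.span {rel} := by
  rw [hp, ← mul_sub]
  exact Ideal.mul_mem_left _ _ (mul_sub_mul_sub_mem_span_sub_one x y _ _)

section Generators

variable (α β γ : ℝ)

def Abar : R4 := C α * a^2 + C β * b^2 + C (2*γ) * (a*b)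

def Bbar : R4 := C α * (a*c) + C β * (b*d) + C γ * (a*d + b*c)

def Dbar : R4 := C α * c^2 + C β * d^2 + C (2*γ) * (c*d)

lemma pderiv_Abar (i : Fin 4) :
    pderiv i (Abar α β γ) = ![2 * (C α * a + C γ * b), 2 * (C β * b + C γ * a), 0, 0] i := by
  fin_cases i <;> simp [Abar, a, b, pderiv_X, map_ofNat] <;> ring

lemma pderiv_Bbar (i : Fin 4) :
    pderiv i (Bbar α β γ) =
      ![C α * c + C γ * d, C β * d + C γ * c, C α * a + C γ * b, C β * b + C γ * a] i := by
  fin_cases i <;> simp [Bbar, a, b, c, d, pderiv_X]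

lemma pderiv_Dbar (i : Fin 4) :
    pderiv i (Dbar α β γ) = ![0, 0, 2 * (C α * c + C γ * d), 2 * (C β * d + C γ * c)] i := by
  fin_cases i <;> simp [Dbar, c, d, pderiv_X, map_ofNat] <;> ring

variable (lam : ℝ)

lemma pb_Abar_Bbar :
    pb (PA lam) (Abar α β γ) (Bbar α β γ) =
      C (2*lam) * (Abar α β γ * (Bbar α β γ - C γ * (a*d - b*c))) := by
  simp only [pb_PA, pderiv_Abar, pderiv_Bbar, Matrix.cons_val_zero, Matrix.cons_val_one,
    Matrix.cons_val_two, Matrix.cons_val_three, Matrix.head_cons, Matrix.tail_cons]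
  simp only [Abar, Bbar, map_mul, map_ofNat]
  ring

lemma pb_Abar_Dbar :
    pb (PA lam) (Abar α β γ) (Dbar α β γ) =
      C (4*lam) * (Bbar α β γ * (Bbar α β γ - C γ * (a*d - b*c))) := by
  simp only [pb_PA, pderiv_Abar, pderiv_Dbar, Matrix.cons_val_zero, Matrix.cons_val_one,
    Matrix.cons_val_two, Matrix.cons_val_three, Matrix.head_cons, Matrix.tail_cons]
  simp only [Bbar, map_mul, map_ofNat]
  ring

lemma pb_Bbar_Dbar :
    pb (PA lam) (Bbar α β γ) (Dbar α β γ) =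
      C (2*lam) * (Dbar α β γ * (Bbar α β γ - C γ * (a*d - b*c))) := by
  simp only [pb_PA, pderiv_Bbar, pderiv_Dbar, Matrix.cons_val_zero, Matrix.cons_val_one,
    Matrix.cons_val_two, Matrix.cons_val_three, Matrix.head_cons, Matrix.tail_cons]
  simp only [Bbar, Dbar, map_mul, map_ofNat]
  ring

end Generators

theorem stmt_13_general (lam α β γ : ℝ) :
    pb (PA lam) (C α * a^2 + C β * b^2 + C (2*γ) * (a*b))
        (C α * (a*c) + C β * (b*d) + C γ * (a*d + b*c)) -
      C (2*lam) * ((C α * a^2 + C β * b^2 + C (2*γ) * (a*b)) *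
        ((C α * (a*c) + C β * (b*d) + C γ * (a*d + b*c)) - C γ)) ∈ Ideal.span {rel} ∧
    pb (PA lam) (C α * a^2 + C β * b^2 + C (2*γ) * (a*b))
        (C α * c^2 + C β * d^2 + C (2*γ) * (c*d)) -
      C (4*lam) * ((C α * (a*c) + C β * (b*d) + C γ * (a*d + b*c)) *
        ((C α * (a*c) + C β * (b*d) + C γ * (a*d + b*c)) - C γ)) ∈ Ideal.span {rel} ∧
    pb (PA lam) (C α * (a*c) + C β * (b*d) + C γ * (a*d + b*c))
        (C α * c^2 + C β * d^2 + C (2*γ) * (c*d)) -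
      C (2*lam) * ((C α * c^2 + C β * d^2 + C (2*γ) * (c*d)) *
        ((C α * (a*c) + C β * (b*d) + C γ * (a*d + b*c)) - C γ)) ∈ Ideal.span {rel} :=
  ⟨sub_mem_span_rel_of_eq (pb_Abar_Bbar α β γ lam),
    sub_mem_span_rel_of_eq (pb_Abar_Dbar α β γ lam),
    sub_mem_span_rel_of_eq (pb_Bbar_Dbar α β γ lam)⟩

/-- For `αβ − γ² = 1`, the elements `Ā = αa²+βb²+2γab`, `B̄ = αac+βbd+γ(ad+bc)`,
`D̄ = αc²+βd²+2γcd` of the Poisson algebra `A^A_λ = ℝ[a,b,c,d]/(ad−bc−1)` satisfy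
`{Ā,B̄} = 2λĀ(B̄−γ)`, `{Ā,D̄} = 4λB̄(B̄−γ)`, `{B̄,D̄} = 2λD̄(B̄−γ)` (equalities modulo the
defining ideal), i.e. the subalgebra they generate is Poisson-isomorphic to `H^A_{λ,−γ}`. -/
theorem stmt_13 (lam α β γ : ℝ) (h : α * β - γ ^ 2 = 1) :
    pb (PA lam) (C α * a^2 + C β * b^2 + C (2*γ) * (a*b))
        (C α * (a*c) + C β * (b*d) + C γ * (a*d + b*c)) -
      C (2*lam) * ((C α * a^2 + C β * b^2 + C (2*γ) * (a*b)) *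
        ((C α * (a*c) + C β * (b*d) + C γ * (a*d + b*c)) - C γ)) ∈ Ideal.span {rel} ∧
    pb (PA lam) (C α * a^2 + C β * b^2 + C (2*γ) * (a*b))
        (C α * c^2 + C β * d^2 + C (2*γ) * (c*d)) -
      C (4*lam) * ((C α * (a*c) + C β * (b*d) + C γ * (a*d + b*c)) *
        ((C α * (a*c) + C β * (b*d) + C γ * (a*d + b*c)) - C γ)) ∈ Ideal.span {rel} ∧
    pb (PA lam) (C α * (a*c) + C β * (b*d) + C γ * (a*d + b*c))
        (C α * c^2 + C β * d^2 + C (2*γ) * (c*d)) -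
      C (2*lam) * ((C α * c^2 + C β * d^2 + C (2*γ) * (c*d)) *
        ((C α * (a*c) + C β * (b*d) + C γ * (a*d + b*c)) - C γ)) ∈ Ideal.span {rel} :=
  stmt_13_general lam α β γ
end
end
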